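/- Let W be symmetric doubly stochastic and y_1,…,y_n ∈ ℝ^d with mean ȳ = (1/n)∑_i y_i. Then ∑_{i,j} w_{ij} ‖y_i − y_j‖² ≥ 2(1 − σ₂(W)) ∑_i ‖y_i − ȳ‖², where σ₂(W) is the second largest singular value of W. -/

import Mathlib

/-!
Writing `z i = y i - ȳ`, the left side equals `2 (∑ ‖z i‖² - ∑ w_ij ⟪z i, z j⟫)`, so it suffices to
show `∑ w_ij ⟪z i, z j⟫ ≤ σ₂ ∑ ‖z i‖²`; coordinatewise this is `⟪x, W x⟫ ≤ ‖x‖ ‖W x‖ ≤ σ₂ ‖x‖²`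
for `x ⊥ 𝟙`. By Jensen `W` is a contraction, so `Wᵀ W` has its eigenvalues in `[0, 1]` and fixes
`𝟙`. All of them but the largest are at most `σ₂²`; if the largest exceeds `σ₂²` it is simple,
so its eigenvector is parallel to `𝟙` and orthogonal to `x`.
-/

/-- The `k`-th largest singular value (0-indexed) of a real square matrix. -/
noncomputable def singularValue {n : ℕ} (A : Matrix (Fin n) (Fin n) ℝ) (k : Fin n) : ℝ :=
  (fun i => Real.sqrt ((Matrix.isHermitian_conjTranspose_mul_self A).eigenvalues i))
    (Tuple.sort (fun i => Real.sqrt ((Matrix.isHermitian_conjTranspose_mul_self A).eigenvalues i))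
      k.rev)

open Matrix Finset WithLp
open scoped RealInnerProductSpace

namespace OrthonormalBasis

variable {ι E : Type*} [Fintype ι] [NormedAddCommGroup E] [InnerProductSpace ℝ E]
  {T : E →ₗ[ℝ] E} (b : OrthonormalBasis ι ℝ E) {μ : ι → ℝ}

theorem inner_map_self_eq_sum_eigenvalues (hb : ∀ i, T (b i) = μ i • b i) (x : E) :
    ⟪T x, x⟫ = ∑ i, μ i * ⟪b i, x⟫ ^ 2 := by
  conv_lhs => rw [← b.sum_repr' x]
  simp only [map_sum, map_smul, hb, smul_smul, sum_inner, real_inner_smul_left]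
  refine sum_congr rfl fun i _ => ?_
  rw [b.sum_repr']
  ring

theorem inner_map_self_le_of_orthogonal_large_eigenvectors (hb : ∀ i, T (b i) = μ i • b i)
    {c : ℝ} {x : E} (hx : ∀ i, c < μ i → ⟪b i, x⟫ = 0) : ⟪T x, x⟫ ≤ c * ‖x‖ ^ 2 := by
  rw [b.inner_map_self_eq_sum_eigenvalues hb, ← b.sum_sq_inner_right, mul_sum]
  refine sum_le_sum fun i _ => ?_
  rcases le_or_gt (μ i) c with h | h
  · exact mul_le_mul_of_nonneg_right h (sq_nonneg _)
  · simp [hx i h]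

theorem inner_eq_zero_of_eigenvalue_ne (hb : ∀ i, T (b i) = μ i • b i) (hT : T.IsSymmetric)
    {u : E} {r : ℝ} (hu : T u = r • u) {i : ι} (hi : μ i ≠ r) : ⟪b i, u⟫ = 0 := by
  have h : μ i * ⟪b i, u⟫ = r * ⟪b i, u⟫ := by
    rw [← real_inner_smul_left, ← hb, hT, hu, real_inner_smul_right]
  by_contra hne
  exact hi (mul_right_cancel₀ hne h)

theorem inner_eq_zero_of_orthogonal_top_eigenvector (hb : ∀ i, T (b i) = μ i • b i)
    (hT : T.IsSymmetric) {i₀ : ι} {c r : ℝ} (hμ : ∀ i ≠ i₀, μ i ≤ c) (hc : c < r) {u : E}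
    (hu₀ : u ≠ 0) (hu : T u = r • u) {x : E} (hx : ⟪u, x⟫ = 0) : ⟪b i₀, x⟫ = 0 := by
  have hu_eq : u = ⟪b i₀, u⟫ • b i₀ := by
    conv_lhs => rw [← b.sum_repr' u]
    refine sum_eq_single i₀ (fun i _ hi => ?_) (by simp)
    rw [b.inner_eq_zero_of_eigenvalue_ne hb hT hu ((hμ i hi).trans_lt hc).ne, zero_smul]
  have hu_coeff : ⟪b i₀, u⟫ ≠ 0 := fun h => hu₀ (by rw [hu_eq, h, zero_smul])
  rw [hu_eq, real_inner_smul_left] at hx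
  exact (mul_eq_zero.1 hx).resolve_left hu_coeff

theorem inner_map_self_le_of_orthogonal_top_eigenvector (hb : ∀ i, T (b i) = μ i • b i)
    (hT : T.IsSymmetric) {i₀ : ι} {c r : ℝ} (hμ : ∀ i ≠ i₀, μ i ≤ c) (hr : μ i₀ ≤ r) {u : E}
    (hu₀ : u ≠ 0) (hu : T u = r • u) {x : E} (hx : ⟪u, x⟫ = 0) : ⟪T x, x⟫ ≤ c * ‖x‖ ^ 2 := by
  refine b.inner_map_self_le_of_orthogonal_large_eigenvectors hb fun i hi => ?_
  obtain rfl : i = i₀ := by_contra fun h => (hμ i h).not_gt hi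
  exact b.inner_eq_zero_of_orthogonal_top_eigenvector hb hT hμ (hi.trans_le hr) hu₀ hu hx

end OrthonormalBasis

theorem Tuple.apply_le_apply_sort_rev_one {α : Type*} [LinearOrder α] {n : ℕ} (f : Fin n → α)
    (hn : 1 < n) {i : Fin n} (hi : i ≠ Tuple.sort f (Fin.rev ⟨0, by omega⟩)) :
    f i ≤ f (Tuple.sort f (Fin.rev ⟨1, hn⟩)) := by
  obtain ⟨j, rfl⟩ := (Tuple.sort f).surjective i
  have hj : j ≤ Fin.rev ⟨1, hn⟩ := by
    have : j ≠ Fin.rev ⟨0, by omega⟩ := fun h => hi (h ▸ rfl)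
    simp only [Ne, Fin.ext_iff, Fin.le_def, Fin.val_rev] at this ⊢
    omega
  exact Tuple.monotone_sort f hj

theorem eigenvalues_conjTranspose_mul_self_le_singularValue_one_sq {n : ℕ} (hn : 1 < n)
    (A : Matrix (Fin n) (Fin n) ℝ) : ∃ i₀, ∀ i ≠ i₀,
      (isHermitian_conjTranspose_mul_self A).eigenvalues i ≤ singularValue A ⟨1, hn⟩ ^ 2 := by
  set g := fun i => √((isHermitian_conjTranspose_mul_self A).eigenvalues i)
  refine ⟨Tuple.sort g (Fin.rev ⟨0, by omega⟩), fun i hi => ?_⟩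
  have hμ : 0 ≤ (isHermitian_conjTranspose_mul_self A).eigenvalues i :=
    (posSemidef_conjTranspose_mul_self A).eigenvalues_nonneg i
  calc (isHermitian_conjTranspose_mul_self A).eigenvalues i = g i ^ 2 := (Real.sq_sqrt hμ).symm
    _ ≤ singularValue A ⟨1, hn⟩ ^ 2 :=
      pow_le_pow_left₀ (Real.sqrt_nonneg _) (Tuple.apply_le_apply_sort_rev_one g hn hi) 2

theorem Matrix.IsHermitian.toEuclideanLin_eigenvectorBasis {ι : Type*} [Fintype ι]
    [DecidableEq ι] {A : Matrix ι ι ℝ} (hA : A.IsHermitian) (i : ι) :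
    toEuclideanLin A (hA.eigenvectorBasis i) = hA.eigenvalues i • hA.eigenvectorBasis i := by
  rw [toLpLin_apply, hA.mulVec_eigenvectorBasis, toLp_smul, toLp_ofLp]

theorem inner_toEuclideanLin_conjTranspose_mul_self {m ι : Type*} [Fintype m] [DecidableEq m]
    [Fintype ι] [DecidableEq ι] (A : Matrix m ι ℝ) (x : EuclideanSpace ℝ ι) :
    ⟪toEuclideanLin (Aᴴ * A) x, x⟫ = ‖toEuclideanLin A x‖ ^ 2 := by
  rw [toLpLin_mul_same, LinearMap.comp_apply, toEuclideanLin_conjTranspose_eq_adjoint,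
    LinearMap.adjoint_inner_left, real_inner_self_eq_norm_sq]

section DoublyStochastic

variable {ι : Type*} [Fintype ι] [DecidableEq ι] {W : Matrix ι ι ℝ}

theorem sq_mulVec_le_mulVec_sq (hW : W ∈ rowStochastic ℝ ι) (x : ι → ℝ) (i : ι) :
    (W *ᵥ x) i ^ 2 ≤ (W *ᵥ (x ^ 2)) i := by
  simpa [mulVec, dotProduct] using (even_two.convexOn_pow (𝕜 := ℝ)).map_sum_le
    (t := univ) (w := W i) (p := x) (fun j _ => nonneg_of_mem_rowStochastic hW)
    (sum_row_of_mem_rowStochastic hW i) (by simp)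

theorem norm_toEuclideanLin_le_of_mem_doublyStochastic (hW : W ∈ doublyStochastic ℝ ι)
    (x : EuclideanSpace ℝ ι) : ‖toEuclideanLin W x‖ ≤ ‖x‖ := by
  have hW_row := (mem_doublyStochastic_iff_mem_rowStochastic_and_mem_colStochastic.1 hW).1
  refine (pow_le_pow_iff_left₀ (norm_nonneg _) (norm_nonneg _) two_ne_zero).1 ?_
  calc ‖toEuclideanLin W x‖ ^ 2 = ∑ i, (W *ᵥ ofLp x) i ^ 2 := EuclideanSpace.real_norm_sq_eq _
    _ ≤ ∑ i, (W *ᵥ (ofLp x ^ 2)) i := sum_le_sum fun i _ => sq_mulVec_le_mulVec_sq hW_row _ i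
    _ = ‖x‖ ^ 2 := by
      rw [sum_mulVec_of_mem_doublyStochastic hW, EuclideanSpace.real_norm_sq_eq]; rfl

theorem eigenvalues_conjTranspose_mul_self_le_one (hW : W ∈ doublyStochastic ℝ ι) (i : ι) :
    (isHermitian_conjTranspose_mul_self W).eigenvalues i ≤ 1 := by
  set hM := isHermitian_conjTranspose_mul_self W
  have h := inner_toEuclideanLin_conjTranspose_mul_self W (hM.eigenvectorBasis i)
  rw [hM.toEuclideanLin_eigenvectorBasis, real_inner_smul_left, real_inner_self_eq_norm_sq,
    hM.eigenvectorBasis.norm_eq_one, one_pow, mul_one] at h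
  rw [h]
  exact pow_le_one₀ (norm_nonneg _) <|
    (norm_toEuclideanLin_le_of_mem_doublyStochastic hW _).trans_eq
      (hM.eigenvectorBasis.norm_eq_one i)

theorem conjTranspose_mul_self_mulVec_one (hW : W ∈ doublyStochastic ℝ ι) :
    (Wᴴ * W) *ᵥ 1 = 1 := by
  rw [← mulVec_mulVec, mulVec_one_of_mem_doublyStochastic hW,
    conjTranspose_eq_transpose_of_trivial,
    mulVec_one_of_mem_doublyStochastic (transpose_mem_doublyStochastic_iff.2 hW)]

end DoublyStochastic

theorem norm_toEuclideanLin_le_singularValue_mul {n : ℕ} (hn : 1 < n)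
    {W : Matrix (Fin n) (Fin n) ℝ} (hW : W ∈ doublyStochastic ℝ (Fin n))
    {x : EuclideanSpace ℝ (Fin n)} (hx : ∑ i, x i = 0) :
    ‖toEuclideanLin W x‖ ≤ singularValue W ⟨1, hn⟩ * ‖x‖ := by
  set hM := isHermitian_conjTranspose_mul_self W
  obtain ⟨i₀, hi₀⟩ := eigenvalues_conjTranspose_mul_self_le_singularValue_one_sq hn W
  set u : EuclideanSpace ℝ (Fin n) := toLp 2 1
  have hu₀ : u ≠ 0 := by
    intro h
    simpa [u] using congr_arg (fun v : EuclideanSpace ℝ (Fin n) => v ⟨0, by omega⟩) h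
  have hu : toEuclideanLin (Wᴴ * W) u = (1 : ℝ) • u := by
    rw [toLpLin_apply, one_smul, ofLp_toLp, conjTranspose_mul_self_mulVec_one hW]
  have hux : ⟪u, x⟫ = 0 := by simpa [u, PiLp.inner_apply] using hx
  have h := hM.eigenvectorBasis.inner_map_self_le_of_orthogonal_top_eigenvector
    hM.toEuclideanLin_eigenvectorBasis (isSymmetric_toEuclideanLin_iff.2 hM) hi₀
    (eigenvalues_conjTranspose_mul_self_le_one hW i₀) hu₀ hu hux
  rw [inner_toEuclideanLin_conjTranspose_mul_self, ← mul_pow] at h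
  have hσ : 0 ≤ singularValue W ⟨1, hn⟩ * ‖x‖ := mul_nonneg (Real.sqrt_nonneg _) (norm_nonneg _)
  exact (pow_le_pow_iff_left₀ (norm_nonneg _) hσ two_ne_zero).1 h

theorem sum_mul_inner_le_singularValue_mul {n d : ℕ} (hn : 1 < n)
    {W : Matrix (Fin n) (Fin n) ℝ} (hW : W ∈ doublyStochastic ℝ (Fin n))
    {z : Fin n → EuclideanSpace ℝ (Fin d)} (hz : ∑ i, z i = 0) :
    ∑ i, ∑ j, W i j * ⟪z i, z j⟫ ≤ singularValue W ⟨1, hn⟩ * ∑ i, ‖z i‖ ^ 2 := by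
  set x : Fin d → EuclideanSpace ℝ (Fin n) := fun k => toLp 2 fun i => z i k
  have hx : ∀ k, ∑ i, x k i = 0 := fun k => by
    simpa [x] using congr_arg (fun v : EuclideanSpace ℝ (Fin d) => v k) hz
  have hcoord : ∀ k, ⟪x k, toEuclideanLin W (x k)⟫ ≤ singularValue W ⟨1, hn⟩ * ‖x k‖ ^ 2 :=
    fun k => calc
      _ ≤ ‖x k‖ * ‖toEuclideanLin W (x k)‖ := real_inner_le_norm _ _
      _ ≤ ‖x k‖ * (singularValue W ⟨1, hn⟩ * ‖x k‖) :=
        mul_le_mul_of_nonneg_left (norm_toEuclideanLin_le_singularValue_mul hn hW (hx k))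
          (norm_nonneg _)
      _ = _ := by ring
  calc ∑ i, ∑ j, W i j * ⟪z i, z j⟫ = ∑ k, ⟪x k, toEuclideanLin W (x k)⟫ := by
        simp only [x, PiLp.inner_apply, toLpLin_apply, mulVec, dotProduct, mul_sum,
          RCLike.inner_apply', conj_trivial]
        conv_rhs => rw [sum_comm]
        refine sum_congr rfl fun i _ => ?_
        conv_rhs => rw [sum_comm]
        exact sum_congr rfl fun j _ => sum_congr rfl fun k _ => by ring
    _ ≤ ∑ k, singularValue W ⟨1, hn⟩ * ‖x k‖ ^ 2 := sum_le_sum fun k _ => hcoord k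
    _ = singularValue W ⟨1, hn⟩ * ∑ i, ‖z i‖ ^ 2 := by
        simp only [← mul_sum, EuclideanSpace.real_norm_sq_eq, x]
        rw [sum_comm]

theorem sum_mul_norm_sub_sq_of_mem_doublyStochastic {ι F : Type*} [Fintype ι] [DecidableEq ι]
    [NormedAddCommGroup F] [InnerProductSpace ℝ F] {W : Matrix ι ι ℝ}
    (hW : W ∈ doublyStochastic ℝ ι) (z : ι → F) :
    ∑ i, ∑ j, W i j * ‖z i - z j‖ ^ 2 = 2 * (∑ i, ‖z i‖ ^ 2 - ∑ i, ∑ j, W i j * ⟪z i, z j⟫) := by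
  have hrow : ∑ i, ∑ j, W i j * ‖z i‖ ^ 2 = ∑ i, ‖z i‖ ^ 2 := by
    simp only [← sum_mul, sum_row_of_mem_doublyStochastic hW, one_mul]
  have hcol : ∑ i, ∑ j, W i j * ‖z j‖ ^ 2 = ∑ j, ‖z j‖ ^ 2 := by
    rw [sum_comm]
    simp only [← sum_mul, sum_col_of_mem_doublyStochastic hW, one_mul]
  simp only [norm_sub_sq_real, mul_add, mul_sub, sum_add_distrib, sum_sub_distrib, hrow, hcol,
    ← mul_sum, mul_left_comm _ (2 : ℝ)]
  ring

/-- Euclidean Poincaré-type inequality for a symmetric doubly stochastic matrix: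
the weighted sum of pairwise squared distances dominates `2(1 - σ₂(W))` times the variance. -/
theorem weighted_pairwise_ge_variance {n d : ℕ} (hn : 2 ≤ n)
    (W : Matrix (Fin n) (Fin n) ℝ)
    (hnonneg : ∀ i j, 0 ≤ W i j)
    (hrow : ∀ i, ∑ j, W i j = 1) (hcol : ∀ j, ∑ i, W i j = 1)
    (y : Fin n → EuclideanSpace ℝ (Fin d))
    (ybar : EuclideanSpace ℝ (Fin d)) (hybar : ybar = ((n : ℝ)⁻¹) • ∑ i, y i) :
    ∑ i, ∑ j, W i j * ‖y i - y j‖ ^ 2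
      ≥ 2 * (1 - singularValue W ⟨1, by omega⟩) * ∑ i, ‖y i - ybar‖ ^ 2 := by
  have hW : W ∈ doublyStochastic ℝ (Fin n) := mem_doublyStochastic_iff_sum.2 ⟨hnonneg, hrow, hcol⟩
  set z : Fin n → EuclideanSpace ℝ (Fin d) := fun i => y i - ybar
  have hz : ∑ i, z i = 0 := by
    have : (n : ℝ) ≠ 0 := by positivity
    rw [sum_sub_distrib, sum_const, card_univ, Fintype.card_fin, hybar,
      ← Nat.cast_smul_eq_nsmul ℝ, smul_smul, mul_inv_cancel₀ this, one_smul, sub_self]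
  have hyz : ∀ i j, y i - y j = z i - z j := fun i j => by simp only [z, sub_sub_sub_cancel_right]
  simp only [hyz]
  rw [ge_iff_le, sum_mul_norm_sub_sq_of_mem_doublyStochastic hW z]
  linarith [sum_mul_inner_le_singularValue_mul (by omega) hW hz]
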